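/- Let θ ≤ α ≤ β be infinite cardinals with 2^{<θ} = θ, and let λ be a cardinal with cf(2^θ) ≤ λ < 2^θ and θ < λ. Then there is no family F of at most 2^θ graphs, each of cardinality λ, such that every K_{α,β}-free graph of cardinality λ embeds as an induced subgraph into some member of F; in particular, the complexity of the class of K_{α,β}-free graphs of cardinality λ is greater than 2^θ. -/

import Mathlib

universe u

open Cardinal

/-- `G` is `K_{α,β}`-free: there are no sets `S`, `T` of vertices with `|S| = α`,
`|T| = β` and every vertex of `S` adjacent to every vertex of `T`. -/
def KBipartiteFree (α β : Cardinal.{u}) {V : Type u} (G : SimpleGraph V) : Prop :=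
  ¬ ∃ S T : Set V, #S = α ∧ #T = β ∧ ∀ s ∈ S, ∀ t ∈ T, G.Adj s t

/-!
The nodes of the binary tree of height `θ` are `θ` many (as `2^{<θ} = θ`), and two distinct
branches among its `2^θ` share fewer than `θ` nodes. Hence for any set `X` of branches, the
node–branch incidence graph is `K_{α,β}`-free: a copy of `K_{α,β}` would put `θ` nodes on two
distinct branches. A graph `G` of size `λ` with a map `f` from the nodes to `G` realises at most
`λ` branches as traces `{n | v ~ f n}` of its vertices `v`. There are only `2^θ` pairs `(G, f)`,
and since `cf(2^θ) ≤ λ < 2^θ`, diagonalising along a cofinal subset of `2^θ` gives a set `X`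
of `λ` branches not realised by any single pair, so its incidence graph embeds into no `G`.
-/

theorem Cardinal.mk_Iic_toType_ord_lt {c : Cardinal.{u}} (hc : ℵ₀ ≤ c) (i : c.ord.ToType) :
    #(Set.Iic i) < c := by
  simpa using mk_Iic_lt i (by simp) (by simpa using hc)

theorem Cardinal.aleph0_le_cof_ord {c : Cardinal.{u}} (hc : ℵ₀ ≤ c) : ℵ₀ ≤ c.ord.cof :=
  Ordinal.aleph0_le_cof_iff.mpr (Ordinal.one_lt_cof_iff.mpr (isSuccLimit_ord hc))

namespace SimpleGraph

variable {A B : Type*}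

def incidenceGraph (r : A → B → Prop) : SimpleGraph (A ⊕ B) where
  Adj
    | .inl a, .inr b => r a b
    | .inr b, .inl a => r a b
    | _, _ => False
  symm := ⟨by rintro (a | b) (a' | b') h <;> exact h⟩
  loopless := ⟨by rintro (a | b) h <;> exact h⟩

variable {r : A → B → Prop}

theorem incidenceGraph_adj_inl {a : A} {x : A ⊕ B} (h : (incidenceGraph r).Adj (.inl a) x) :
    ∃ b, x = .inr b ∧ r a b := by
  cases x with
  | inl _ => exact h.elim
  | inr b => exact ⟨b, rfl, h⟩

theorem incidenceGraph_adj_inr {x : A ⊕ B} {b : B} (h : (incidenceGraph r).Adj x (.inr b)) :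
    ∃ a, x = .inl a ∧ r a b := by
  cases x with
  | inl a => exact ⟨a, rfl, h⟩
  | inr _ => exact h.elim

end SimpleGraph

open SimpleGraph

section IncidenceGraph

variable {A B : Type u} {r : A → B → Prop} {κ : Cardinal.{u}}

theorem mk_lt_of_forall_incidenceGraph_adj
    (hr : ∀ b b', b ≠ b' → #{a // r a b ∧ r a b'} < κ) {S T : Set (A ⊕ B)}
    (hST : ∀ s ∈ S, ∀ t ∈ T, (incidenceGraph r).Adj s t) {a : A} (ha : .inl a ∈ S)
    (hT : 1 < #T) : #S < κ := by
  obtain ⟨⟨t₁, ht₁⟩, ⟨t₂, ht₂⟩, hne⟩ := one_lt_iff_nontrivial.mp hT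
  obtain ⟨b₁, rfl, -⟩ := incidenceGraph_adj_inl (hST _ ha _ ht₁)
  obtain ⟨b₂, rfl, -⟩ := incidenceGraph_adj_inl (hST _ ha _ ht₂)
  have hS : S ⊆ Set.range fun a : {a // r a b₁ ∧ r a b₂} => (Sum.inl a.1 : A ⊕ B) := by
    intro s hs
    obtain ⟨a', rfl, h₁⟩ := incidenceGraph_adj_inr (hST _ hs _ ht₁)
    exact ⟨⟨a', h₁, hST _ hs _ ht₂⟩, rfl⟩
  calc #S ≤ #{a // r a b₁ ∧ r a b₂} := (mk_le_mk_of_subset hS).trans mk_range_le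
    _ < κ := hr _ _ fun h => hne (by subst h; rfl)

theorem kBipartiteFree_incidenceGraph (hr : ∀ b b', b ≠ b' → #{a // r a b ∧ r a b'} < κ)
    {α β : Cardinal.{u}} (hα : 1 < α) (hκα : κ ≤ α) (hαβ : α ≤ β) :
    KBipartiteFree α β (incidenceGraph r) := by
  rintro ⟨S, T, rfl, rfl, hST⟩
  have hβ : 1 < #T := hα.trans_le hαβ
  obtain ⟨⟨s, hs⟩⟩ := (one_lt_iff_nontrivial.mp hα).to_nonempty
  cases s with
  | inl a => exact (mk_lt_of_forall_incidenceGraph_adj hr hST hs hβ).not_ge hκα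
  | inr b =>
    obtain ⟨⟨t, ht⟩⟩ := (one_lt_iff_nontrivial.mp hβ).to_nonempty
    obtain ⟨a, rfl, -⟩ := incidenceGraph_adj_inr (hST _ hs _ ht).symm
    exact (mk_lt_of_forall_incidenceGraph_adj hr (fun t ht s hs => (hST s hs t ht).symm) ht
      hα).not_ge (hκα.trans hαβ)

end IncidenceGraph

section Tree

variable (θ : Cardinal.{u})

def TreeNode : Type u := Σ i : θ.ord.ToType, (Set.Iic i → Bool)

variable {θ}

def branchNode (b : θ.ord.ToType → Bool) (i : θ.ord.ToType) : TreeNode θ :=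
  ⟨i, fun j => b j⟩

def branch (b : θ.ord.ToType → Bool) : Set (TreeNode θ) :=
  Set.range (branchNode b)

theorem mk_treeNode_le (hθ : ℵ₀ ≤ θ) (hpow : 2 ^< θ = θ) : #(TreeNode θ) ≤ θ := by
  have hlevel (i : θ.ord.ToType) : #(Set.Iic i → Bool) ≤ θ := by
    simpa [hpow] using le_powerlt 2 (mk_Iic_toType_ord_lt hθ i)
  calc #(TreeNode θ) ≤ sum fun _ : θ.ord.ToType => θ :=
        (mk_sigma _).trans_le (sum_le_sum _ _ hlevel)
    _ = θ := by rw [sum_const', mk_ord_toType, mul_eq_self hθ]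

theorem branchNode_injective (b : θ.ord.ToType → Bool) : Function.Injective (branchNode b) :=
  fun _ _ h => congrArg Sigma.fst h

theorem mk_branch (b : θ.ord.ToType → Bool) : #(branch b) = θ := by
  rw [branch, mk_range_eq _ (branchNode_injective b), mk_ord_toType]

theorem mk_branch_inter_branch_lt {b b' : θ.ord.ToType → Bool} (hb : b ≠ b') :
    #↥(branch b ∩ branch b') < θ := by
  obtain ⟨i₀, hi₀⟩ := Function.ne_iff.mp hb
  have hsub : branch b ∩ branch b' ⊆ branchNode b '' Set.Iio i₀ := by
    rintro _ ⟨⟨i, rfl⟩, ⟨i', hi'⟩⟩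
    obtain rfl : i = i' := (congrArg Sigma.fst hi').symm
    refine ⟨i, Set.mem_Iio.mpr (not_le.mp fun hle => hi₀ ?_), rfl⟩
    exact (congrFun (eq_of_heq (Sigma.mk.inj hi').2) ⟨i₀, hle⟩).symm
  calc #↥(branch b ∩ branch b') ≤ #(Set.Iio i₀) := (mk_le_mk_of_subset hsub).trans mk_image_le
    _ < θ := by simpa using mk_Iio_lt i₀ (by simp)

theorem branch_injective : Function.Injective (branch (θ := θ)) := by
  intro b b' h
  by_contra hb
  have := mk_branch_inter_branch_lt hb
  rw [← h, Set.inter_self, mk_branch] at this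
  exact this.false

theorem exists_almostDisjoint_family (hθ : ℵ₀ ≤ θ) (hpow : 2 ^< θ = θ) :
    ∃ (N : Type u) (F : Set (Set N)),
      #N ≤ θ ∧ #F = 2 ^ θ ∧ F.Pairwise fun s t => #↥(s ∩ t) < θ := by
  refine ⟨TreeNode θ, Set.range branch, mk_treeNode_le hθ hpow, ?_, ?_⟩
  · rw [mk_range_eq _ branch_injective]
    simp
  · rintro _ ⟨b, rfl⟩ _ ⟨b', rfl⟩ hne
    exact mk_branch_inter_branch_lt fun h => hne (congrArg branch h)

end Tree

section Diagonalization

variable {X J : Type u} {κ μ : Cardinal.{u}}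

theorem exists_subset_mk_le_cof_not_subset (hκ : ℵ₀ ≤ κ) {F : Set X} (hF : #F = κ)
    (hJ : #J ≤ κ) (A : J → Set X) (hA : ∀ j, #(A j) ≤ μ) (hμ : μ < κ) :
    ∃ Z ⊆ F, #Z ≤ κ.ord.cof ∧ ∀ j, ¬ Z ⊆ A j := by
  obtain ⟨rank⟩ : Nonempty (J ↪ κ.ord.ToType) := by rwa [← le_def, mk_ord_toType]
  set U : κ.ord.ToType → Set X := fun γ => ⋃ j ∈ rank ⁻¹' Set.Iic γ, A j
  have hU (γ) : #(U γ) < κ := by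
    refine (mk_biUnion_le _ _).trans_lt (mul_lt_of_lt hκ ?_ ?_)
    · exact (mk_preimage_of_injective _ _ rank.injective).trans_lt (mk_Iic_toType_ord_lt hκ γ)
    · exact (ciSup_le' fun j : ↥(rank ⁻¹' Set.Iic γ) => hA j.1).trans_lt hμ
  have hpick (γ) : ∃ x ∈ F, x ∉ U γ :=
    Set.not_subset.mp fun h => (mk_le_mk_of_subset h).not_gt (hF ▸ hU γ)
  choose x hxF hxU using hpick
  obtain ⟨C, hC, hCcard⟩ := Order.exists_cof_eq κ.ord.ToType
  refine ⟨x '' C, Set.image_subset_iff.mpr fun γ _ => hxF γ, ?_, fun j hj => ?_⟩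
  · exact mk_image_le.trans (hCcard.trans (Ordinal.cof_toType _)).le
  · obtain ⟨γ, hγC, hγ⟩ := hC (rank j)
    exact hxU γ (Set.mem_biUnion hγ (hj ⟨γ, hγC, rfl⟩))

theorem exists_superset_subset_mk_eq {Z F : Set X} (hZF : Z ⊆ F) (hZ : #Z ≤ μ) (hμF : μ ≤ #F)
    (hμ : ℵ₀ ≤ μ) : ∃ Y, Z ⊆ Y ∧ Y ⊆ F ∧ #Y = μ := by
  obtain ⟨P, hPF, hP⟩ := le_mk_iff_exists_subset.mp hμF
  refine ⟨Z ∪ P, Set.subset_union_left, Set.union_subset hZF hPF, le_antisymm ?_ ?_⟩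
  · calc #↥(Z ∪ P) ≤ μ + μ := (mk_union_le _ _).trans (add_le_add hZ hP.le)
      _ = μ := add_eq_self hμ
  · exact hP ▸ mk_le_mk_of_subset Set.subset_union_right

theorem exists_subset_mk_eq_not_subset (hκ : ℵ₀ ≤ κ) {F : Set X} (hF : #F = κ)
    (hJ : #J ≤ κ) (A : J → Set X) (hA : ∀ j, #(A j) ≤ μ) (hcf : κ.ord.cof ≤ μ) (hμ : μ < κ) :
    ∃ Y ⊆ F, #Y = μ ∧ ∀ j, ¬ Y ⊆ A j := by
  obtain ⟨Z, hZF, hZ, hZA⟩ := exists_subset_mk_le_cof_not_subset hκ hF hJ A hA hμ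
  obtain ⟨Y, hZY, hYF, hY⟩ := exists_superset_subset_mk_eq hZF (hZ.trans hcf) (hF ▸ hμ.le)
    ((aleph0_le_cof_ord hκ).trans hcf)
  exact ⟨Y, hYF, hY, fun j hYA => hZA j (hZY.trans hYA)⟩

end Diagonalization

theorem Cardinal.mk_sigma_arrow_le {ι N : Type u} {V : ι → Type u} {θ : Cardinal.{u}}
    (hθ : ℵ₀ ≤ θ) (hι : #ι ≤ 2 ^ θ) (hN : #N ≤ θ) (hV : ∀ i, #(V i) ≤ 2 ^ θ) :
    #(Σ i, N → V i) ≤ 2 ^ θ := by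
  have hfiber (i : ι) : #(N → V i) ≤ 2 ^ θ :=
    calc #(N → V i) = #(V i) ^ #N := (power_def _ _).symm
      _ ≤ (2 ^ θ) ^ θ := (power_le_power_right (hV i)).trans
          (power_le_power_left (power_ne_zero _ two_ne_zero) hN)
      _ = 2 ^ θ := by rw [← power_mul, mul_eq_self hθ]
  calc #(Σ i, N → V i) ≤ sum fun _ : ι => (2 : Cardinal) ^ θ :=
        (mk_sigma _).trans_le (sum_le_sum _ _ hfiber)
    _ = #ι * 2 ^ θ := sum_const' _ _
    _ ≤ 2 ^ θ * 2 ^ θ := mul_le_mul_left hι _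
    _ = 2 ^ θ := mul_eq_self (hθ.trans (cantor θ).le)

/-- For infinite cardinals `θ ≤ α ≤ β` with `2^{<θ} = θ` and `λ` with
`cf(2^θ) ≤ λ < 2^θ` and `θ < λ`, there is no family of at most `2^θ` graphs, each of
cardinality `λ`, embedding (as induced subgraphs) all `K_{α,β}`-free graphs of
cardinality `λ`; i.e. the complexity of the class of `K_{α,β}`-free graphs in power `λ`
exceeds `2^θ`. -/
theorem stmt12 (θ α β lam : Cardinal.{u}) (hθ : ℵ₀ ≤ θ) (hθα : θ ≤ α) (hαβ : α ≤ β)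
    (hpow : (2 : Cardinal.{u}) ^< θ = θ)
    (hcf : ((2 : Cardinal.{u}) ^ θ).ord.cof ≤ lam) (hlt : lam < 2 ^ θ) (hθlam : θ < lam) :
    ¬ ∃ (ι : Type u) (V : ι → Type u) (G : ∀ i, SimpleGraph (V i)),
        #ι ≤ 2 ^ θ ∧ (∀ i, #(V i) = lam) ∧
        ∀ (W : Type u) (H : SimpleGraph W), #W = lam → KBipartiteFree α β H →
          ∃ i, Nonempty (H ↪g G i) := by
  rintro ⟨ι, V, G, hι, hV, hcover⟩
  obtain ⟨N, F, hN, hF, hdisj⟩ := exists_almostDisjoint_family hθ hpow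
  set A : (Σ i, N → V i) → Set (Set N) := fun j => Set.range fun v => {n | (G j.1).Adj v (j.2 n)}
  obtain ⟨X, hXF, hX, hXA⟩ := exists_subset_mk_eq_not_subset (hθ.trans (cantor θ).le) hF
    (mk_sigma_arrow_le hθ hι hN fun i => (hV i).trans_le hlt.le) A
    (fun j => mk_range_le.trans (hV j.1).le) hcf hlt
  set H := incidenceGraph fun (n : N) (s : X) => n ∈ (s : Set N)
  have hH : KBipartiteFree α β H := kBipartiteFree_incidenceGraph
    (fun s t hst => hdisj (hXF s.2) (hXF t.2) (Subtype.coe_ne_coe.mpr hst))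
    (one_lt_aleph0.trans_le (hθ.trans hθα)) hθα hαβ
  have hW : #(N ⊕ X) = lam := by
    rw [mk_sum, lift_id, lift_id, hX]
    exact add_eq_right (hθ.trans hθlam.le) (hN.trans hθlam.le)
  obtain ⟨i, ⟨f⟩⟩ := hcover _ H hW hH
  -- each `s ∈ X` is the trace of the vertex `f (inr s)` on the image of the nodes
  exact hXA ⟨i, fun n => f (.inl n)⟩ fun s hs =>
    ⟨f (.inr ⟨s, hs⟩), Set.ext fun _ => f.map_adj_iff⟩
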